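/- Let n be a positive natural number and let R = ℤ[t,t⁻¹] be the ring of Laurent polynomials over ℤ. Consider the free R-module M = (Fin (2n) → R) × (Fin (2n) → R), and let N be the R-submodule of M spanned by the elements ((t−1) • e_i + e_{i−1}, 0) and (0, (t⁻¹−1) • e_i + e_{i+1}) for i ∈ Fin (2n), where i+1 and i−1 are taken cyclically in Fin (2n). Then M ⧸ N is isomorphic as an R-module to (R ⧸ Ideal.span {1 − (1−t)^{2n}}) × (R ⧸ Ideal.span {1 − (1−t⁻¹)^{2n}}). -/

import Mathlib

/-!
In `(Fin m → R) ⧸ ⟨e_{i+1} - b • e_i⟩` every basis vector is `b ^ i • e_0`, and going once around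
the cycle gives `(1 - b ^ m) • e_0 = 0`; so this quotient is cyclic on `e_0` with annihilator
`(1 - b ^ m)`, the inverse isomorphism being `x ↦ ∑ x_i b ^ i`. The relations `e_{i-1} - a • e_i`
take the same form after reindexing by `i ↦ -i`. The presentation of the theorem is the direct sum
of one relation module of each kind, with `a = 1 - t` and `b = 1 - t⁻¹`.
-/

open Fin.NatCast Submodule

theorem Ideal.Quotient.mk_pow_mod {R : Type*} [CommRing R] (b : R) (m k : ℕ) :
    Ideal.Quotient.mk (Ideal.span {1 - b ^ m}) (b ^ (k % m)) =
      Ideal.Quotient.mk (Ideal.span {1 - b ^ m}) (b ^ k) := by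
  have hbm : Ideal.Quotient.mk (Ideal.span {1 - b ^ m}) (b ^ m) = 1 := by
    rw [← map_one (Ideal.Quotient.mk _), Ideal.Quotient.mk_eq_mk_iff_sub_mem]
    exact Ideal.mem_span_singleton.2 ⟨-1, by ring⟩
  conv_rhs => rw [← Nat.mod_add_div k m, pow_add, pow_mul, map_mul, map_pow _ (b ^ m), hbm,
    one_pow, mul_one]

section CyclicPresentation

variable {R : Type*} [CommRing R] (m : ℕ) (b : R)

noncomputable def cyclicEval : (Fin m → R) →ₗ[R] R ⧸ Ideal.span {1 - b ^ m} :=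
  Fintype.linearCombination R fun i : Fin m => Ideal.Quotient.mk _ (b ^ (i : ℕ))

theorem cyclicEval_single (i : Fin m) :
    cyclicEval m b (Pi.single i 1) = Ideal.Quotient.mk _ (b ^ (i : ℕ)) := by
  rw [cyclicEval, Fintype.linearCombination_apply_single, one_smul]

variable [NeZero m]

def cyclicRelations : Submodule R (Fin m → R) :=
  span R (Set.range fun i : Fin m => Pi.single (i + 1) 1 - b • Pi.single i 1)

theorem cyclicEval_single_natCast (k : ℕ) :
    cyclicEval m b (Pi.single (k : Fin m) 1) = Ideal.Quotient.mk _ (b ^ k) := by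
  rw [cyclicEval_single, Fin.coe_natCast_eq_mod, Ideal.Quotient.mk_pow_mod]

theorem cyclicRelations_le_ker_cyclicEval :
    cyclicRelations m b ≤ LinearMap.ker (cyclicEval m b) := by
  rw [cyclicRelations, span_le]
  rintro _ ⟨i, rfl⟩
  obtain ⟨k, rfl⟩ : ∃ k : ℕ, (k : Fin m) = i := ⟨i, Fin.cast_val_eq_self i⟩
  rw [SetLike.mem_coe, LinearMap.mem_ker, map_sub, map_smul, ← Nat.cast_add_one,
    cyclicEval_single_natCast, cyclicEval_single_natCast, pow_succ', map_mul, Algebra.smul_def,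
    Ideal.Quotient.algebraMap_eq, sub_self]

theorem mkQ_single_natCast (k : ℕ) :
    (cyclicRelations m b).mkQ (Pi.single (k : Fin m) 1) =
      b ^ k • (cyclicRelations m b).mkQ (Pi.single 0 1) := by
  induction k with
  | zero => simp
  | succ k ih =>
    rw [Nat.cast_add_one, pow_succ', mul_smul, ← ih, ← map_smul, ← sub_eq_zero, ← map_sub,
      mkQ_apply, Quotient.mk_eq_zero]
    exact subset_span ⟨k, rfl⟩

theorem one_sub_pow_smul_mkQ_single_zero :
    (1 - b ^ m) • (cyclicRelations m b).mkQ (Pi.single 0 1) = 0 := by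
  rw [sub_smul, one_smul, ← mkQ_single_natCast, Fin.natCast_self, sub_self]

noncomputable def cyclicQuotientEquiv :
    ((Fin m → R) ⧸ cyclicRelations m b) ≃ₗ[R] R ⧸ Ideal.span {1 - b ^ m} :=
  LinearEquiv.ofLinearMap ((cyclicRelations m b).liftQ _ (cyclicRelations_le_ker_cyclicEval m b))
    ((Ideal.span {1 - b ^ m}).liftQ
      (LinearMap.toSpanSingleton R _ ((cyclicRelations m b).mkQ (Pi.single 0 1)))
      (span_le.2 <| Set.singleton_subset_iff.2 <| one_sub_pow_smul_mkQ_single_zero m b))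
    (by
      refine linearMap_qext _ (LinearMap.ext_ring ?_)
      simp only [LinearMap.comp_apply, mkQ_apply, liftQ_apply, LinearMap.toSpanSingleton_apply,
        one_smul, cyclicEval_single, Fin.val_zero, pow_zero]
      rfl)
    (by
      ext i : 3
      simp only [LinearMap.comp_apply, mkQ_apply, liftQ_apply, LinearMap.single_apply,
        cyclicEval_single, ← Ideal.Quotient.mk_eq_mk, LinearMap.toSpanSingleton_apply]
      rw [← mkQ_apply, ← mkQ_apply, ← mkQ_single_natCast, Fin.cast_val_eq_self, LinearMap.id_apply])

theorem map_cyclicRelations_funCongrLeft_neg :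
    (cyclicRelations m b).map
        (LinearEquiv.funCongrLeft R R (Equiv.neg (Fin m)) : (Fin m → R) →ₗ[R] Fin m → R) =
      span R (Set.range fun i : Fin m => Pi.single (i - 1) 1 - b • Pi.single i 1) := by
  rw [cyclicRelations, map_span, ← Set.range_comp, ← (Equiv.neg (Fin m)).surjective.range_comp]
  refine congrArg (fun f => span R (Set.range f)) (funext fun i => ?_)
  simp only [Function.comp_apply, LinearEquiv.coe_coe, map_sub, map_smul,
    LinearEquiv.funCongrLeft_apply, LinearMap.funLeft, LinearMap.coe_mk, AddHom.coe_mk,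
    Pi.single_comp_equiv]
  simp only [Equiv.neg_symm, Equiv.neg_apply, neg_add', neg_neg]

noncomputable def reflectedCyclicQuotientEquiv :
    ((Fin m → R) ⧸ span R (Set.range fun i : Fin m => Pi.single (i - 1) 1 - b • Pi.single i 1))
      ≃ₗ[R] R ⧸ Ideal.span {1 - b ^ m} :=
  (Quotient.equiv _ _ _ (map_cyclicRelations_funCongrLeft_neg m b)).symm.trans
    (cyclicQuotientEquiv m b)

end CyclicPresentation

noncomputable def Submodule.quotientProdEquiv {R M N : Type*} [Ring R] [AddCommGroup M]
    [AddCommGroup N] [Module R M] [Module R N] (p : Submodule R M) (q : Submodule R N) :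
    ((M × N) ⧸ p.prod q) ≃ₗ[R] (M ⧸ p) × (N ⧸ q) :=
  (quotEquivOfEq _ _ (by rw [LinearMap.ker_prodMap, ker_mkQ, ker_mkQ])).trans
    ((p.mkQ.prodMap q.mkQ).quotKerEquivOfSurjective
      (by rw [LinearMap.coe_prodMap]; exact p.mkQ_surjective.prodMap q.mkQ_surjective))

open LaurentPolynomial

/-- For `n > 0` and `R = ℤ[t,t⁻¹]`, the quotient of
`M = (Fin (2n) → R) × (Fin (2n) → R)` by the submodule spanned by the elements
`((t - 1) • e_i + e_{i-1}, 0)` and `(0, (t⁻¹ - 1) • e_i + e_{i+1})`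
(indices cyclic in `Fin (2n)`) is isomorphic as an `R`-module to
`(R ⧸ (1 - (1 - t)^(2n))) × (R ⧸ (1 - (1 - t⁻¹)^(2n)))`. -/
theorem wheel_homology_module (n : ℕ) (hn : 0 < n) :
    haveI : NeZero (2 * n) := ⟨by omega⟩
    Nonempty
      ((((Fin (2 * n) → LaurentPolynomial ℤ) × (Fin (2 * n) → LaurentPolynomial ℤ)) ⧸
          Submodule.span (LaurentPolynomial ℤ)
            ((Set.range fun i : Fin (2 * n) =>
                (((T 1 - 1 : LaurentPolynomial ℤ) •
                      (Pi.single i (1 : LaurentPolynomial ℤ) :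
                        Fin (2 * n) → LaurentPolynomial ℤ) +
                    Pi.single (i - 1) (1 : LaurentPolynomial ℤ), 0) :
                  (Fin (2 * n) → LaurentPolynomial ℤ) × (Fin (2 * n) → LaurentPolynomial ℤ))) ∪
              (Set.range fun i : Fin (2 * n) =>
                ((0, (T (-1) - 1 : LaurentPolynomial ℤ) •
                      (Pi.single i (1 : LaurentPolynomial ℤ) :
                        Fin (2 * n) → LaurentPolynomial ℤ) +
                    Pi.single (i + 1) (1 : LaurentPolynomial ℤ)) :
                  (Fin (2 * n) → LaurentPolynomial ℤ) ×
                    (Fin (2 * n) → LaurentPolynomial ℤ))))) ≃ₗ[LaurentPolynomial ℤ]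
        ((LaurentPolynomial ℤ ⧸
            Ideal.span {(1 : LaurentPolynomial ℤ) - (1 - T 1) ^ (2 * n)}) ×
          (LaurentPolynomial ℤ ⧸
            Ideal.span {(1 : LaurentPolynomial ℤ) - (1 - T (-1)) ^ (2 * n)}))) := by

  have : NeZero (2 * n) := ⟨by omega⟩
  refine ⟨(quotEquivOfEq _ _ ?_).trans ((quotientProdEquiv _ _).trans
    ((reflectedCyclicQuotientEquiv _ (1 - T 1)).prodCongr (cyclicQuotientEquiv _ (1 - T (-1)))))⟩
  rw [cyclicRelations, ← LinearMap.span_inl_union_inr, ← Set.range_comp, ← Set.range_comp]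
  congr 3 <;> funext i <;> ext : 1 <;>
    simp only [Function.comp_apply, LinearMap.inl_apply, LinearMap.inr_apply] <;> module
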